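/- For every integer m ≥ 6, let Γ be the graph on vertex set {1, 2, …, m} in which distinct vertices i and j are joined by an edge if and only if |⌈i/2⌉ − ⌈j/2⌉| = 1. Then Γ has exactly 2m − 4 edges and Γ is thick of order 1. -/

import Mathlib

namespace RACG

variable {V : Type*}

/-- `e` is a non-edge of the graph `G`: an unordered pair of two distinct,
non-adjacent vertices. -/
def IsNonEdge (G : SimpleGraph V) (e : Sym2 V) : Prop :=
  ¬ e.IsDiag ∧ e ∉ G.edgeSet

/-- The vertex subset `S` is *thick of order 0* in `G`: it admits a partition
`S = A ⊔ B` where neither `G[A]` nor `G[B]` is a clique and every vertex of `A`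
is adjacent to every vertex of `B` (i.e. `G[S] = G[A] * G[B]` is a join). -/
def ThickZeroSet (G : SimpleGraph V) (S : Set V) : Prop :=
  ∃ A B : Set V, A ∪ B = S ∧ Disjoint A B ∧
    ¬ G.IsClique A ∧ ¬ G.IsClique B ∧ ∀ a ∈ A, ∀ b ∈ B, G.Adj a b

/-- Adjacency in the square graph `T₁(G)`: two non-edges `f, f'` are adjacent
iff the four vertices of `f ∪ f'` induce a `4`-cycle of `G` with diagonals
`f` and `f'`. -/
def squareAdj (G : SimpleGraph V) (f f' : Sym2 V) : Prop :=
  IsNonEdge G f ∧ IsNonEdge G f' ∧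
    ∃ a b c d : V, f = s(a, c) ∧ f' = s(b, d) ∧
      G.Adj a b ∧ G.Adj b c ∧ G.Adj c d ∧ G.Adj d a

/-- The suspension of a non-edge `f = {u₁, u₂}`: the set of common neighbours
of `u₁` and `u₂`. -/
def susp (G : SimpleGraph V) (f : Sym2 V) : Set V :=
  {v | ∀ u ∈ f, G.Adj v u}

/-- `C` is a connected component of the graph whose vertices are the non-edges
of `G` and whose adjacency relation is `adj`. -/
def IsComp (G : SimpleGraph V) (adj : Sym2 V → Sym2 V → Prop)
    (C : Set (Sym2 V)) : Prop :=
  ∃ f, IsNonEdge G f ∧ C = {g | IsNonEdge G g ∧ Relation.ReflTransGen adj f g}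

/-- The support of a collection `C` of non-edges at level `k`: for `k ≤ 1`
it is the union of the members of `C`; for `k ≥ 2` one also adds the
suspensions based at members of `C`. -/
def supp (G : SimpleGraph V) (k : ℕ) (C : Set (Sym2 V)) : Set V :=
  if k ≤ 1 then {v | ∃ f ∈ C, v ∈ f}
  else {v | ∃ f ∈ C, v ∈ f ∨ v ∈ susp G f}

/-- The latch-set of `C` at level `k`: all non-edges of `G` contained in
`supp G k C`. -/
def latch (G : SimpleGraph V) (k : ℕ) (C : Set (Sym2 V)) : Set (Sym2 V) :=
  {e | IsNonEdge G e ∧ ∀ v ∈ e, v ∈ supp G k C}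

/-- The adjacency relation of the level `k` graph `T_k(G)` (on the non-edges
of `G`), for `k ≥ 1`: `T₁` is the square graph, and in `T_{k+1}` two
non-edges `f₁, f₂` are adjacent iff there are connected components `C₁, C₂`
of `T_k(G)` with `fᵢ ∈ latch_k(Cᵢ)` and `latch_k(C₁) ∩ latch_k(C₂) ≠ ∅`. -/
def Tadj (G : SimpleGraph V) : ℕ → Sym2 V → Sym2 V → Prop
  | 0 => squareAdj G
  | 1 => squareAdj G
  | (k + 2) => fun f₁ f₂ =>
      ∃ C₁ C₂ : Set (Sym2 V),
        IsComp G (Tadj G (k + 1)) C₁ ∧ IsComp G (Tadj G (k + 1)) C₂ ∧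
        f₁ ∈ latch G (k + 1) C₁ ∧ f₂ ∈ latch G (k + 1) C₂ ∧
        (latch G (k + 1) C₁ ∩ latch G (k + 1) C₂).Nonempty

/-- Some connected component `C` of `T_k(G)` has full latch-set, i.e.
`latch_k(C)` is the set of all non-edges of `G`. -/
def FullAt (G : SimpleGraph V) (k : ℕ) : Prop :=
  ∃ C : Set (Sym2 V), IsComp G (Tadj G k) C ∧
    latch G k C = {e | IsNonEdge G e}

/-- `G` is thick of order `k`: for `k = 0` this means that the whole vertex
set is thick of order `0`; for `k ≥ 1` it means that `k` is the least
integer `≥ 1` such that some connected component of `T_k(G)` has latch-set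
equal to the set of all non-edges of `G`. -/
def ThickOfOrder (G : SimpleGraph V) : ℕ → Prop
  | 0 => ThickZeroSet G Set.univ
  | (k + 1) => FullAt G (k + 1) ∧ ∀ j, 1 ≤ j → j < k + 1 → ¬ FullAt G j

/-- `G` is thick of order at most `k`. -/
def ThickOfOrderAtMost (G : SimpleGraph V) (k : ℕ) : Prop :=
  ∃ k' ≤ k, ThickOfOrder G k'

/-- `G` is thick: thick of some finite order. -/
def Thick (G : SimpleGraph V) : Prop :=
  ∃ k, ThickOfOrder G k

/-- The induced subgraph of `G` on the finset `S` is a *cherry* `K_{1,2}`,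
i.e. an induced path on three vertices. -/
def IsCherry [DecidableEq V] (G : SimpleGraph V) (S : Finset V) : Prop :=
  ∃ a b c : V, S = {a, b, c} ∧ a ≠ b ∧ b ≠ c ∧ a ≠ c ∧
    G.Adj a b ∧ G.Adj b c ∧ ¬ G.Adj a c

end RACG

namespace RACG

/-- The ceiling `⌈i/2⌉` of the label `i = v + 1 ∈ {1, …, m}` of the vertex
`v : Fin m`. -/
def ceilHalf {m : ℕ} (v : Fin m) : ℕ := (v.val + 2) / 2

/-- The *path of squares*: the graph on `{1, …, m}` (modelled on `Fin m`
via `v ↦ v + 1`) in which distinct vertices `i`, `j` are adjacent iff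
`|⌈i/2⌉ - ⌈j/2⌉| = 1`. -/
def pathOfSquares (m : ℕ) : SimpleGraph (Fin m) where
  Adj i j := ceilHalf i = ceilHalf j + 1 ∨ ceilHalf j = ceilHalf i + 1
  symm := ⟨fun _ _ h => h.symm⟩
  loopless := ⟨fun i h => by rcases h with h | h <;> omega⟩

end RACG


namespace RACG

variable {m : ℕ}

instance : DecidableRel (pathOfSquares m).Adj := fun _ _ =>
  inferInstanceAs (Decidable (_ ∨ _))

lemma adj_mk {x y : ℕ} (hx : x < m) (hy : y < m)
    (h : (x+2)/2 = (y+2)/2 + 1 ∨ (y+2)/2 = (x+2)/2 + 1) :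
    (pathOfSquares m).Adj ⟨x, hx⟩ ⟨y, hy⟩ := h

lemma isNonEdge_mk {x y : ℕ} (hx : x < m) (hy : y < m) (hxy : x ≠ y)
    (h : ¬((x+2)/2 = (y+2)/2 + 1 ∨ (y+2)/2 = (x+2)/2 + 1)) :
    IsNonEdge (pathOfSquares m) s((⟨x, hx⟩ : Fin m), ⟨y, hy⟩) := by
  refine ⟨?_, ?_⟩
  · rw [Sym2.mk_isDiag_iff]
    simp only [Fin.mk.injEq]
    exact hxy
  · rw [SimpleGraph.mem_edgeSet]
    exact h

/-- The within-block non-edge of block `k`. -/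
def blockNonEdge (k : ℕ) (hk : 2*k+1 < m) : Sym2 (Fin m) :=
  s(⟨2*k, by omega⟩, ⟨2*k+1, hk⟩)

lemma blockNonEdge_isNonEdge (k : ℕ) (hk : 2*k+1 < m) :
    IsNonEdge (pathOfSquares m) (blockNonEdge k hk) :=
  isNonEdge_mk _ _ (by omega) (by omega)

lemma blockNonEdge_step (k : ℕ) (hk : 2*(k+1)+1 < m) :
    squareAdj (pathOfSquares m) (blockNonEdge k (by omega)) (blockNonEdge (k+1) hk) := by
  refine ⟨blockNonEdge_isNonEdge k (by omega), blockNonEdge_isNonEdge (k+1) hk,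
    ⟨2*k, by omega⟩, ⟨2*k+2, by omega⟩, ⟨2*k+1, by omega⟩, ⟨2*k+3, by omega⟩,
    rfl, ?_, ?_, ?_, ?_, ?_⟩
  · rfl
  all_goals exact adj_mk _ _ (by omega)

lemma blockNonEdge_reachable (k : ℕ) (hk : 2*k+1 < m) :
    Relation.ReflTransGen (squareAdj (pathOfSquares m))
      (blockNonEdge 0 (by omega)) (blockNonEdge k hk) := by
  induction k with
  | zero => exact Relation.ReflTransGen.refl
  | succ n ih =>
      exact Relation.ReflTransGen.tail (ih (by omega)) (blockNonEdge_step n hk)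

/-- The component of `blockNonEdge 0` in the square graph. -/
def comp0 (m : ℕ) (hm : 6 ≤ m) : Set (Sym2 (Fin m)) :=
  {g | IsNonEdge (pathOfSquares m) g ∧
    Relation.ReflTransGen (squareAdj (pathOfSquares m))
      (blockNonEdge 0 (by omega)) g}

lemma mem_comp0_blockNonEdge (hm : 6 ≤ m) (k : ℕ) (hk : 2*k+1 < m) :
    blockNonEdge k hk ∈ comp0 m hm :=
  ⟨blockNonEdge_isNonEdge k hk, blockNonEdge_reachable k hk⟩

/-- If `m` is odd, the non-edge `{m-5, m-1}` is also in the component. -/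
lemma odd_last_mem (hm : 6 ≤ m) (hodd : m % 2 = 1) :
    s((⟨m-5, by omega⟩ : Fin m), ⟨m-1, by omega⟩) ∈ comp0 m hm := by
  have hne : IsNonEdge (pathOfSquares m)
      s((⟨m-5, by omega⟩ : Fin m), ⟨m-1, by omega⟩) :=
    isNonEdge_mk _ _ (by omega) (by omega)
  refine ⟨hne, Relation.ReflTransGen.tail
    (blockNonEdge_reachable ((m-3)/2) (by omega)) ?_⟩
  refine ⟨blockNonEdge_isNonEdge _ _, hne,
    ⟨m-3, by omega⟩, ⟨m-5, by omega⟩, ⟨m-2, by omega⟩, ⟨m-1, by omega⟩,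
    ?_, rfl, ?_, ?_, ?_, ?_⟩
  · show s(_, _) = s(_, _)
    rw [Sym2.eq_iff]
    left
    constructor <;> (rw [Fin.ext_iff]; simp only [Fin.val_mk]; omega)
  all_goals exact adj_mk _ _ (by omega)

lemma every_vertex_covered (hm : 6 ≤ m) (v : Fin m) :
    ∃ f ∈ comp0 m hm, v ∈ f := by
  rcases Nat.lt_or_ge (v.val) (2*(m/2)) with hv | hv
  · -- v is in a full block
    refine ⟨blockNonEdge (v.val/2) (by omega), mem_comp0_blockNonEdge hm _ _, ?_⟩
    rw [blockNonEdge, Sym2.mem_iff]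
    rcases Nat.mod_two_eq_zero_or_one v.val with he | ho
    · left; rw [Fin.ext_iff]; simp only [Fin.val_mk]; omega
    · right; rw [Fin.ext_iff]; simp only [Fin.val_mk]; omega
  · -- m odd, v = m - 1
    have hodd : m % 2 = 1 := by omega
    have hv' : v.val = m - 1 := by omega
    refine ⟨_, odd_last_mem hm hodd, ?_⟩
    rw [Sym2.mem_iff]
    right; rw [Fin.ext_iff]; exact hv'

lemma comp0_full (hm : 6 ≤ m) :
    latch (pathOfSquares m) 1 (comp0 m hm) =
      {e | IsNonEdge (pathOfSquares m) e} := by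
  ext e
  simp only [latch, Set.mem_setOf_eq, and_iff_left_iff_imp]
  intro _ v _
  simp only [supp, if_pos (le_refl 1), Set.mem_setOf_eq]
  exact every_vertex_covered hm v

section Counting

/-- The inner count: vertices `i` one block below `j`. -/
lemma inner_count (hm : 6 ≤ m) (j : Fin m) :
    (∑ i : Fin m, if ((j : ℕ)+2)/2 = ((i : ℕ)+2)/2 + 1 then 1 else 0) =
      if 2 ≤ (j : ℕ) then 2 else 0 := by
  by_cases hj : 2 ≤ (j : ℕ)
  · rw [if_pos hj, ← Finset.card_filter]
    have : (Finset.univ.filter (fun i : Fin m => ((j : ℕ)+2)/2 = ((i : ℕ)+2)/2 + 1))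
        = {(⟨2*(((j:ℕ)+2)/2) - 4, by omega⟩ : Fin m), ⟨2*(((j:ℕ)+2)/2) - 3, by omega⟩} := by
      ext x
      simp only [Finset.mem_filter, Finset.mem_univ, true_and, Finset.mem_insert,
        Finset.mem_singleton, Fin.ext_iff]
      omega
    rw [this]
    rw [Finset.card_insert_of_notMem (by simp [Fin.ext_iff]; omega), Finset.card_singleton]
  · rw [if_neg hj]
    refine Finset.sum_eq_zero fun i _ => ?_
    rw [if_neg (by omega)]

lemma edge_count (hm : 6 ≤ m) :
    (pathOfSquares m).edgeSet.ncard = 2 * m - 4 := by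
  classical
  rw [← SimpleGraph.coe_edgeFinset, Set.ncard_coe_finset]
  have hbij : (pathOfSquares m).edgeFinset.card =
      (Finset.univ.filter
        (fun p : Fin m × Fin m => ((p.2 : ℕ)+2)/2 = ((p.1 : ℕ)+2)/2 + 1)).card := by
    refine (Finset.card_bij (fun p _ => s(p.1, p.2)) ?_ ?_ ?_).symm
    · intro p hp
      rw [Finset.mem_filter] at hp
      rw [SimpleGraph.mem_edgeFinset, SimpleGraph.mem_edgeSet]
      exact Or.inr hp.2
    · intro p hp q hq hpq
      rw [Finset.mem_filter] at hp hq
      rw [Sym2.eq_iff] at hpq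
      rcases hpq with ⟨h1, h2⟩ | ⟨h1, h2⟩
      · exact Prod.ext h1 h2
      · exfalso
        have e1 := hp.2; have e2 := hq.2
        have h1' := congrArg Fin.val h1
        have h2' := congrArg Fin.val h2
        omega
    · intro e he
      rw [SimpleGraph.mem_edgeFinset] at he
      induction e with
      | _ a b =>
        rw [SimpleGraph.mem_edgeSet] at he
        rcases he with h | h
        · exact ⟨(b, a), Finset.mem_filter.mpr ⟨Finset.mem_univ _, h⟩, Sym2.eq_swap⟩
        · exact ⟨(a, b), Finset.mem_filter.mpr ⟨Finset.mem_univ _, h⟩, rfl⟩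
  rw [hbij, Finset.card_filter, Fintype.sum_prod_type_right]
  have : ∀ j : Fin m, (∑ i : Fin m,
      if ((j : ℕ)+2)/2 = ((i : ℕ)+2)/2 + 1 then 1 else 0) = if 2 ≤ (j : ℕ) then 2 else 0 :=
    inner_count hm
  rw [Finset.sum_congr rfl (fun j _ => this j)]
  rw [show (fun j : Fin m => if 2 ≤ (j : ℕ) then 2 else 0) = (fun j : Fin m => (fun n : ℕ => if 2 ≤ n then 2 else 0) (j : ℕ)) from rfl]
  rw [Fin.sum_univ_eq_sum_range (fun n => if 2 ≤ n then 2 else 0) m]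
  rw [← Finset.sum_range_add_sum_Ico _ (show 2 ≤ m by omega)]
  rw [Finset.sum_congr rfl (fun x hx => if_neg (by simp at hx; omega)),
      Finset.sum_congr rfl (fun x hx => if_pos (by simp [Finset.mem_Ico] at hx; omega))]
  simp [Nat.card_Ico]
  omega

end Counting

end RACG

open RACG in
/-- For every `m ≥ 6`, the path of squares on `m` vertices
has exactly `2m - 4` edges and is thick of order `1`. -/
theorem pathOfSquares_thick_one (m : ℕ) (hm : 6 ≤ m) :
    (pathOfSquares m).edgeSet.ncard = 2 * m - 4 ∧
    ThickOfOrder (pathOfSquares m) 1 := by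
  constructor
  · exact edge_count hm
  · refine ⟨?_, fun j h1 h2 => absurd h2 ((by omega : ¬ j < 1))⟩
    refine ⟨comp0 m hm, ⟨blockNonEdge 0 (by omega), blockNonEdge_isNonEdge 0 (by omega), rfl⟩, ?_⟩
    exact comp0_full hm
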